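/- arXiv:2201.06339 — 5 statements merged into one kernel-verified Lean document; each statement's English description precedes it below -/
import Mathlib

section
/- Let $n, k, \ell, t, s$ be nonnegative integers with $n \ge k+\ell$ and $s+t \le k$, and $q \ge 2$. Then the function $g(r) = {\ell-r \brack t-r}_q {n-s-t+r \brack k-s-t+r}_q$ is strictly increasing for $r \in \{0, 1, \ldots, t-1\}$, i.e., $g(r+1) > g(r)$ for $0 \le r \le t-2$. -/
/-- Gaussian binomial coefficient defined by the product formula. -/
noncomputable def gaussBinom (q a b : ℕ) : ℚ :=
  ∏ i ∈ Finset.range b, ((q : ℚ) ^ (a - i) - 1) / ((q : ℚ) ^ (b - i) - 1)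

lemma gaussBinom_pos (q a b : ℕ) (hq : 2 ≤ q) (hba : b ≤ a) : 0 < gaussBinom q a b := by
  unfold gaussBinom
  apply Finset.prod_pos
  intro i hi
  rw [Finset.mem_range] at hi
  have hq1 : (1:ℚ) < (q:ℚ) := by exact_mod_cast hq
  have h1 : (1:ℚ) < (q:ℚ) ^ (a - i) := one_lt_pow₀ hq1 (by omega)
  have h2 : (1:ℚ) < (q:ℚ) ^ (b - i) := one_lt_pow₀ hq1 (by omega)
  exact div_pos (by linarith) (by linarith)

lemma gaussBinom_succ (q a b : ℕ) :
    gaussBinom q (a+1) (b+1)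
      = gaussBinom q a b * (((q:ℚ)^(a+1) - 1)/((q:ℚ)^(b+1) - 1)) := by
  unfold gaussBinom
  rw [Finset.prod_range_succ']
  congr 1
  exact Finset.prod_congr rfl fun i _ => by rw [Nat.succ_sub_succ, Nat.succ_sub_succ]

lemma core_ineq (q a b A B : ℕ) (hq : 2 ≤ q) (hb : 2 ≤ b) (hA : 2 ≤ A)
    (hsum : a + B + 2 ≤ A + b) :
    ((q:ℚ)^a - 1) * ((q:ℚ)^B - 1) < ((q:ℚ)^A - 1) * ((q:ℚ)^b - 1) := by
  have hq1 : (1:ℚ) ≤ (q:ℚ) := by exact_mod_cast le_trans (by norm_num) hq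
  have hq2 : (2:ℚ) ≤ (q:ℚ) := by exact_mod_cast hq
  set M : ℕ := A + b - 2 with hM
  have hMeq : A + b = M + 2 := by omega
  have h1 : (q:ℚ)^(a+B) ≤ (q:ℚ)^M := pow_le_pow_right₀ hq1 (by omega)
  have h2 : (q:ℚ)^A ≤ (q:ℚ)^M := pow_le_pow_right₀ hq1 (by omega)
  have h3 : (q:ℚ)^b ≤ (q:ℚ)^M := pow_le_pow_right₀ hq1 (by omega)
  have h4 : (1:ℚ) ≤ (q:ℚ)^a := one_le_pow₀ hq1
  have h5 : (1:ℚ) ≤ (q:ℚ)^B := one_le_pow₀ hq1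
  have h6 : (0:ℚ) < (q:ℚ)^M := by positivity
  have h7 : 4 * (q:ℚ)^M ≤ (q:ℚ)^(A+b) := by
    rw [hMeq, pow_add]
    have : (4:ℚ) ≤ (q:ℚ)^2 := by nlinarith
    nlinarith
  have hab : (q:ℚ)^(a+B) = (q:ℚ)^a * (q:ℚ)^B := pow_add _ _ _
  have hAb : (q:ℚ)^(A+b) = (q:ℚ)^A * (q:ℚ)^b := pow_add _ _ _
  nlinarith [h1, h2, h3, h4, h5, h7]

theorem stmt5 (q n k ℓ t s r : ℕ) (hq : 2 ≤ q) (hn : k + ℓ ≤ n) (hstk : s + t ≤ k)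
    (htℓ : t ≤ ℓ) (hr : r + 2 ≤ t) :
    gaussBinom q (ℓ - r) (t - r) * gaussBinom q (n - s - t + r) (k - s - t + r)
      < gaussBinom q (ℓ - (r + 1)) (t - (r + 1)) *
          gaussBinom q (n - s - t + (r + 1)) (k - s - t + (r + 1)) := by
  have e1 : ℓ - r = (ℓ - (r+1)) + 1 := by omega
  have e2 : t - r = (t - (r+1)) + 1 := by omega
  have e3 : n - s - t + (r + 1) = (n - s - t + r) + 1 := by omega
  have e4 : k - s - t + (r + 1) = (k - s - t + r) + 1 := by omega
  rw [e1, e2, e3, e4, gaussBinom_succ, gaussBinom_succ]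
  set X := gaussBinom q (ℓ - (r+1)) (t - (r+1)) with hX
  set Y := gaussBinom q (n - s - t + r) (k - s - t + r) with hY
  have hXpos : 0 < X := gaussBinom_pos _ _ _ hq (by omega)
  have hYpos : 0 < Y := gaussBinom_pos _ _ _ hq (by omega)
  have hq1 : (1:ℚ) < (q:ℚ) := by exact_mod_cast hq
  have hd1 : (0:ℚ) < (q:ℚ)^(t - (r+1) + 1) - 1 := by
    have := one_lt_pow₀ hq1 (n := t - (r+1) + 1) (by omega); linarith
  have hd2 : (0:ℚ) < (q:ℚ)^(k - s - t + r + 1) - 1 := by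
    have := one_lt_pow₀ hq1 (n := k - s - t + r + 1) (by omega); linarith
  have hcore : ((q:ℚ)^(ℓ - (r+1) + 1) - 1) / ((q:ℚ)^(t - (r+1) + 1) - 1)
      < ((q:ℚ)^(n - s - t + r + 1) - 1) / ((q:ℚ)^(k - s - t + r + 1) - 1) := by
    rw [div_lt_div_iff₀ hd1 hd2]
    exact core_ineq q _ _ _ _ hq (by omega) (by omega) (by omega)
  calc X * (((q:ℚ)^(ℓ - (r+1) + 1) - 1) / ((q:ℚ)^(t - (r+1) + 1) - 1)) * Y
      = X * Y * (((q:ℚ)^(ℓ - (r+1) + 1) - 1) / ((q:ℚ)^(t - (r+1) + 1) - 1)) := by ring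
    _ < X * Y * (((q:ℚ)^(n - s - t + r + 1) - 1) / ((q:ℚ)^(k - s - t + r + 1) - 1)) :=
        mul_lt_mul_of_pos_left hcore (mul_pos hXpos hYpos)
    _ = X * (Y * (((q:ℚ)^(n - s - t + r + 1) - 1) / ((q:ℚ)^(k - s - t + r + 1) - 1))) := by ring
end

section
/- Let $V$ be an $n$-dimensional vector space over $\mathbb{F}_q$, $n \ge k+\ell$, let $G$ be an $\ell$-subspace and $S$ an $s$-subspace of $V$ with $\dim(G \cap S) = r < t$. Let $\mathcal{F}$ be a family of $k$-subspaces of $V$ such that $\dim(G \cap F) \ge t$ for all $F \in \mathcal{F}$, and let $\mathcal{F}_S = \{F \in \mathcal{F} : S \subseteq F\}$. Then $|\mathcal{F}_S| \le {\ell-r \brack t-r}_q {n-s-t+r \brack k-s-t+r}_q$. -/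
namespace GaussAux

noncomputable def PP (q a : ℕ) : ℚ := ∏ i ∈ Finset.range a, ((q:ℚ)^(i+1) - 1)

variable {q : ℕ}

lemma term_pos (hq : 2 ≤ q) {j : ℕ} (hj : 1 ≤ j) : (0:ℚ) < (q:ℚ)^j - 1 := by
  have h2 : (2:ℚ) ≤ (q:ℚ) := by exact_mod_cast hq
  have : (2:ℚ)^j ≤ (q:ℚ)^j := by
    apply pow_le_pow_left₀ (by norm_num) h2
  have : (2:ℚ) ≤ (q:ℚ)^j := le_trans (by
    calc (2:ℚ) = 2^1 := by norm_num
    _ ≤ 2^j := by apply pow_le_pow_right₀ (by norm_num) hj) this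
  linarith

lemma term_nonneg (hq : 2 ≤ q) (j : ℕ) : (0:ℚ) ≤ (q:ℚ)^j - 1 := by
  have h2 : (1:ℚ) ≤ (q:ℚ) := by exact_mod_cast Nat.one_le_of_lt hq
  have : (1:ℚ) ≤ (q:ℚ)^j := one_le_pow₀ h2
  linarith

lemma term_mono (hq : 2 ≤ q) {i j : ℕ} (hij : i ≤ j) : (q:ℚ)^i - 1 ≤ (q:ℚ)^j - 1 := by
  have h2 : (1:ℚ) ≤ (q:ℚ) := by exact_mod_cast Nat.one_le_of_lt hq
  have := pow_le_pow_right₀ h2 hij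
  linarith

lemma PP_pos (hq : 2 ≤ q) (a : ℕ) : 0 < PP q a := by
  apply Finset.prod_pos
  intro i _
  exact term_pos hq (Nat.le_add_left 1 i)

lemma PP_add (a b : ℕ) : PP q (a + b) = PP q a * ∏ i ∈ Finset.range b, ((q:ℚ)^(a+1+i) - 1) := by
  rw [PP, Finset.prod_range_add, PP]
  congr 1
  apply Finset.prod_congr rfl
  intro i _
  congr 2
  omega

lemma gauss_eq_div (hq : 2 ≤ q) {a b : ℕ} (hba : b ≤ a) :
    gaussBinom q a b = PP q a / (PP q b * PP q (a - b)) := by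
  have hden : ∏ i ∈ Finset.range b, ((q:ℚ)^(b-i) - 1) = PP q b := by
    rw [PP, ← Finset.prod_range_reflect]
    apply Finset.prod_congr rfl
    intro i hi
    simp only [Finset.mem_range] at hi
    congr 2
    omega
  have hnum : ∏ i ∈ Finset.range b, ((q:ℚ)^(a-i) - 1)
      = ∏ i ∈ Finset.range b, ((q:ℚ)^(a-b+1+i) - 1) := by
    rw [← Finset.prod_range_reflect]
    apply Finset.prod_congr rfl
    intro i hi
    simp only [Finset.mem_range] at hi
    congr 2
    omega
  have hPa : PP q a = PP q (a - b) * ∏ i ∈ Finset.range b, ((q:ℚ)^(a-b+1+i) - 1) := by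
    conv_lhs => rw [show a = (a - b) + b by omega]
    exact PP_add _ _
  rw [gaussBinom, Finset.prod_div_distrib, hden, hnum, hPa]
  have h1 : PP q b ≠ 0 := ne_of_gt (PP_pos hq b)
  have h2 : PP q (a-b) ≠ 0 := ne_of_gt (PP_pos hq (a-b))
  field_simp

lemma gauss_nonneg (hq : 2 ≤ q) (a b : ℕ) : 0 ≤ gaussBinom q a b := by
  apply Finset.prod_nonneg
  intro i hi
  simp only [Finset.mem_range] at hi
  apply div_nonneg (term_nonneg hq _)
  exact le_of_lt (term_pos hq (by omega))

lemma gauss_mono (hq : 2 ≤ q) {a b c : ℕ} (hbc : b ≤ c) (hsum : b + c ≤ a) :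
    gaussBinom q a b ≤ gaussBinom q a c := by
  have hba : b ≤ a := by omega
  have hca : c ≤ a := by omega
  rw [gauss_eq_div hq hba, gauss_eq_div hq hca]
  have hkey : PP q c * PP q (a - c) ≤ PP q b * PP q (a - b) := by
    obtain ⟨x, rfl⟩ : ∃ x, c = b + x := ⟨c - b, by omega⟩
    have h1 : PP q (b + x) = PP q b * ∏ i ∈ Finset.range x, ((q:ℚ)^(b+1+i) - 1) := PP_add _ _
    have h2 : PP q (a - b) = PP q (a - (b+x)) * ∏ i ∈ Finset.range x, ((q:ℚ)^(a-(b+x)+1+i) - 1) := by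
      conv_lhs => rw [show a - b = (a - (b+x)) + x by omega]
      exact PP_add _ _
    rw [h1, h2]
    have hprod : ∏ i ∈ Finset.range x, ((q:ℚ)^(b+1+i) - 1)
        ≤ ∏ i ∈ Finset.range x, ((q:ℚ)^(a-(b+x)+1+i) - 1) := by
      apply Finset.prod_le_prod
      · intro i _; exact term_nonneg hq _
      · intro i _; exact term_mono hq (by omega)
    calc PP q b * (∏ i ∈ Finset.range x, ((q:ℚ)^(b+1+i) - 1)) * PP q (a - (b+x))
        ≤ PP q b * (∏ i ∈ Finset.range x, ((q:ℚ)^(a-(b+x)+1+i) - 1)) * PP q (a - (b+x)) := by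
          apply mul_le_mul_of_nonneg_right _ (le_of_lt (PP_pos hq _))
          exact mul_le_mul_of_nonneg_left hprod (le_of_lt (PP_pos hq _))
      _ = PP q b * (PP q (a - (b+x)) * ∏ i ∈ Finset.range x, ((q:ℚ)^(a-(b+x)+1+i) - 1)) := by ring
  apply div_le_div_of_nonneg_left (le_of_lt (PP_pos hq a)) _ hkey
  exact mul_pos (PP_pos hq c) (PP_pos hq (a - c))

lemma gauss_prod_eq (hq : 2 ≤ q) {n d : ℕ} (hd : d ≤ n) :
    gaussBinom q n d = ∏ i ∈ Finset.range d,
      (((q^n - q^i : ℕ) : ℚ) / ((q^d - q^i : ℕ) : ℚ)) := by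
  rw [gaussBinom]
  apply Finset.prod_congr rfl
  intro i hi
  simp only [Finset.mem_range] at hi
  have hq1 : 1 ≤ q := by omega
  have hpow : ∀ m : ℕ, i ≤ m → ((q^m - q^i : ℕ):ℚ) = (q:ℚ)^i * ((q:ℚ)^(m-i) - 1) := by
    intro m him
    have hle : q^i ≤ q^m := Nat.pow_le_pow_right hq1 him
    rw [Nat.cast_sub hle, mul_sub, mul_one, ← pow_add]
    push_cast
    congr 2
    omega
  rw [hpow n (by omega), hpow d (by omega)]
  have hqi : ((q:ℚ)^i) ≠ 0 := by
    have : (0:ℚ) < (q:ℚ) := by exact_mod_cast (by omega : 0 < q)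
    positivity
  rw [mul_div_mul_left _ _ hqi]

end GaussAux

open Module

section Count

variable {K : Type*} [Field K] [Fintype K] {V : Type*} [AddCommGroup V] [Module K V]
  [FiniteDimensional K V]

/-- Bases of a `d`-dimensional subspace inject into independent tuples; double counting. -/
theorem card_subspaces_le {q : ℕ} (hq : Fintype.card K = q) {d : ℕ}
    (hd : d ≤ finrank K V) :
    (Nat.card {W : Submodule K V // finrank K W = d} : ℚ)
      ≤ gaussBinom q (finrank K V) d := by
  classical
  have hq2 : 2 ≤ q := hq ▸ Fintype.one_lt_card
  haveI : Finite V := Module.finite_of_finite K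
  haveI : Finite (Submodule K V) := Finite.of_injective _ SetLike.coe_injective
  set n := finrank K V with hn
  -- the injection from (subspace, basis) pairs to independent tuples
  have key : ∀ (W : {W : Submodule K V // finrank K W = d})
      (s : {s : Fin d → W.1 // LinearIndependent K s}),
      Submodule.span K (Set.range (fun i => ((s.1 i : V)))) = W.1 := by
    rintro ⟨W, hW⟩ ⟨s, hs⟩
    have h1 : (fun i => ((s i : V))) = W.subtype ∘ s := rfl
    have h2 : Set.range (W.subtype ∘ s) = W.subtype '' Set.range s := Set.range_comp _ _
    rw [h1, h2, ← Submodule.map_span]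
    have htop : Submodule.span K (Set.range s) = ⊤ := by
      apply Submodule.eq_top_of_finrank_eq
      rw [finrank_span_eq_card hs, Fintype.card_fin, hW]
    rw [htop, Submodule.map_subtype_top]
  let Φ : (Σ W : {W : Submodule K V // finrank K W = d},
      {s : Fin d → W.1 // LinearIndependent K s}) → {s : Fin d → V // LinearIndependent K s} :=
    fun x => ⟨fun i => (x.2.1 i : V), x.2.2.map' x.1.1.subtype x.1.1.ker_subtype⟩
  have hΦinj : Function.Injective Φ := by
    rintro ⟨⟨W₁, hW₁⟩, ⟨s₁, hs₁⟩⟩ ⟨⟨W₂, hW₂⟩, ⟨s₂, hs₂⟩⟩ h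
    have hco : (fun i => ((s₁ i : V))) = (fun i => ((s₂ i : V))) := congrArg Subtype.val h
    have hWeq : W₁ = W₂ := by
      have k1 : Submodule.span K (Set.range fun i => ((s₁ i : V))) = W₁ :=
        key ⟨W₁, hW₁⟩ ⟨s₁, hs₁⟩
      have k2 : Submodule.span K (Set.range fun i => ((s₂ i : V))) = W₂ :=
        key ⟨W₂, hW₂⟩ ⟨s₂, hs₂⟩
      rw [← k1, ← k2, hco]
    subst hWeq
    have : s₁ = s₂ := funext fun i => Subtype.ext (congrFun hco i)
    subst this
    rfl
  have hcard : Nat.card (Σ W : {W : Submodule K V // finrank K W = d},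
      {s : Fin d → W.1 // LinearIndependent K s})
      ≤ Nat.card {s : Fin d → V // LinearIndependent K s} :=
    Nat.card_le_card_of_injective Φ hΦinj
  have hA : Nat.card {s : Fin d → V // LinearIndependent K s}
      = ∏ i : Fin d, (q ^ n - q ^ (i : ℕ)) := by
    rw [card_linearIndependent hd, hq]
  have hB : ∀ W : {W : Submodule K V // finrank K W = d},
      Nat.card {s : Fin d → W.1 // LinearIndependent K s}
      = ∏ i : Fin d, (q ^ d - q ^ (i : ℕ)) := by
    intro W
    have : d ≤ finrank K W.1 := le_of_eq W.2.symm
    rw [card_linearIndependent this, hq, W.2]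
  have hsigma : Nat.card (Σ W : {W : Submodule K V // finrank K W = d},
      {s : Fin d → W.1 // LinearIndependent K s})
      = Nat.card {W : Submodule K V // finrank K W = d} * ∏ i : Fin d, (q ^ d - q ^ (i : ℕ)) := by
    haveI : Fintype {W : Submodule K V // finrank K W = d} := Fintype.ofFinite _
    haveI : ∀ W : {W : Submodule K V // finrank K W = d},
        Fintype {s : Fin d → W.1 // LinearIndependent K s} := fun W => Fintype.ofFinite _
    rw [Nat.card_eq_fintype_card, Fintype.card_sigma, Nat.card_eq_fintype_card]
    have hBf : ∀ W : {W : Submodule K V // finrank K W = d},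
        Fintype.card {s : Fin d → W.1 // LinearIndependent K s}
          = ∏ i : Fin d, (q ^ d - q ^ (i : ℕ)) := fun W => by
      rw [← Nat.card_eq_fintype_card, hB W]
    calc ∑ W : {W : Submodule K V // finrank K W = d},
          Fintype.card {s : Fin d → W.1 // LinearIndependent K s}
        = ∑ _W : {W : Submodule K V // finrank K W = d},
            ∏ i : Fin d, (q ^ d - q ^ (i : ℕ)) := Finset.sum_congr rfl (fun W _ => hBf W)
      _ = Fintype.card {W : Submodule K V // finrank K W = d}
            * ∏ i : Fin d, (q ^ d - q ^ (i : ℕ)) := by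
          rw [Finset.sum_const, Finset.card_univ, smul_eq_mul]
  rw [hsigma, hA] at hcard
  -- now pass to ℚ
  have hBpos : 0 < ∏ i : Fin d, (q ^ d - q ^ (i : ℕ)) := by
    apply Finset.prod_pos
    intro i _
    have : q ^ (i : ℕ) < q ^ d := Nat.pow_lt_pow_right (by omega) i.2
    omega
  rw [GaussAux.gauss_prod_eq hq2 hd, Finset.prod_div_distrib]
  have hBQ : (0:ℚ) < ∏ i ∈ Finset.range d, ((q ^ d - q ^ i : ℕ) : ℚ) := by
    apply Finset.prod_pos
    intro i hi
    simp only [Finset.mem_range] at hi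
    have : q ^ i < q ^ d := Nat.pow_lt_pow_right (by omega) hi
    have h0 : 0 < q ^ d - q ^ i := by omega
    exact_mod_cast h0
  rw [le_div_iff₀ hBQ]
  have hcard' : Nat.card {W : Submodule K V // finrank K W = d}
      * ∏ i ∈ Finset.range d, (q ^ d - q ^ i)
      ≤ ∏ i ∈ Finset.range d, (q ^ n - q ^ i) := by
    rw [Fin.prod_univ_eq_prod_range (fun i => q ^ n - q ^ i) d,
      Fin.prod_univ_eq_prod_range (fun i => q ^ d - q ^ i) d] at hcard
    exact hcard
  exact_mod_cast hcard'


theorem card_subspaces_between_le {q : ℕ} (hq : Fintype.card K = q) {U : Submodule K V}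
    {u k : ℕ} (hU : finrank K U = u) (huk : u ≤ k) (hkn : k ≤ finrank K V) :
    ({W : Submodule K V | U ≤ W ∧ finrank K W = k}.ncard : ℚ)
      ≤ gaussBinom q (finrank K V - u) (k - u) := by
  classical
  haveI : Finite V := Module.finite_of_finite K
  haveI : Finite (V ⧸ U) := Module.finite_of_finite K
  haveI : Finite (Submodule K (V ⧸ U)) := Finite.of_injective _ SetLike.coe_injective
  set n := finrank K V with hn
  have hquot : finrank K (V ⧸ U) = n - u := by
    have := Submodule.finrank_quotient_add_finrank U
    omega
  -- finrank of the image in the quotient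
  have hmaprank : ∀ W : Submodule K V, U ≤ W → finrank K W = k →
      finrank K (Submodule.map U.mkQ W) = k - u := by
    intro W hUW hW
    have hrn := LinearMap.finrank_range_add_finrank_ker (U.mkQ.comp W.subtype)
    have hrange : LinearMap.range (U.mkQ.comp W.subtype) = Submodule.map U.mkQ W := by
      rw [LinearMap.range_comp, Submodule.range_subtype]
    have hker : LinearMap.ker (U.mkQ.comp W.subtype) = Submodule.comap W.subtype U := by
      rw [LinearMap.ker_comp, Submodule.ker_mkQ]
    have hkerrank : finrank K (LinearMap.ker (U.mkQ.comp W.subtype)) = u := by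
      rw [hker, (Submodule.comapSubtypeEquivOfLe hUW).finrank_eq, hU]
    rw [hrange, hkerrank, hW] at hrn
    omega
  have hsub : {W : Submodule K V | U ≤ W ∧ finrank K W = k}.ncard
      ≤ {W' : Submodule K (V ⧸ U) | finrank K W' = k - u}.ncard := by
    apply Set.ncard_le_ncard_of_injOn (fun W => Submodule.map U.mkQ W)
    · rintro W ⟨hUW, hW⟩
      exact hmaprank W hUW hW
    · rintro W₁ ⟨hUW₁, -⟩ W₂ ⟨hUW₂, -⟩ h
      have e1 : Submodule.comap U.mkQ (Submodule.map U.mkQ W₁) = W₁ := by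
        rw [Submodule.comap_map_eq, Submodule.ker_mkQ, sup_eq_left.2 hUW₁]
      have e2 : Submodule.comap U.mkQ (Submodule.map U.mkQ W₂) = W₂ := by
        rw [Submodule.comap_map_eq, Submodule.ker_mkQ, sup_eq_left.2 hUW₂]
      have h' : Submodule.map U.mkQ W₁ = Submodule.map U.mkQ W₂ := h
      rw [← e1, ← e2, h']
  have hL1 : ({W' : Submodule K (V ⧸ U) | finrank K W' = k - u}.ncard : ℚ)
      ≤ gaussBinom q (n - u) (k - u) := by
    rw [← Nat.card_coe_set_eq]
    have : k - u ≤ finrank K (V ⧸ U) := by rw [hquot]; omega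
    have hres := card_subspaces_le hq this
    rw [hquot] at hres
    exact_mod_cast hres
  calc ({W : Submodule K V | U ≤ W ∧ finrank K W = k}.ncard : ℚ)
      ≤ ({W' : Submodule K (V ⧸ U) | finrank K W' = k - u}.ncard : ℚ) := by exact_mod_cast hsub
    _ ≤ gaussBinom q (n - u) (k - u) := hL1

theorem exists_submodule_between {p W : Submodule K V} (hpW : p ≤ W) {t : ℕ}
    (hpt : finrank K p ≤ t) (htW : t ≤ finrank K W) :
    ∃ T : Submodule K V, p ≤ T ∧ T ≤ W ∧ finrank K T = t := by
  obtain ⟨d, hd⟩ : ∃ d, t = finrank K p + d := ⟨t - finrank K p, by omega⟩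
  subst hd
  clear hpt
  induction d with
  | zero => exact ⟨p, le_refl p, hpW, rfl⟩
  | succ d ih =>
    obtain ⟨T, hpT, hTW, hT⟩ := ih (by omega)
    have hTlt : T < W := by
      rcases lt_or_eq_of_le hTW with h | h
      · exact h
      · exfalso; rw [h] at hT; omega
    obtain ⟨x, hxW, hxT⟩ := SetLike.exists_of_lt hTlt
    refine ⟨T ⊔ Submodule.span K {x}, le_trans hpT le_sup_left, ?_, ?_⟩
    · exact sup_le hTW ((Submodule.span_singleton_le_iff_mem x W).2 hxW)
    · have hx0 : x ≠ 0 := by rintro rfl; exact hxT (Submodule.zero_mem T)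
      have hspan1 : finrank K (Submodule.span K {x} : Submodule K V) = 1 :=
        finrank_span_singleton hx0
      have hinf : T ⊓ Submodule.span K {x} = ⊥ := by
        rw [eq_bot_iff]
        rintro y ⟨hyT, hySpan⟩
        obtain ⟨c, rfl⟩ := Submodule.mem_span_singleton.1 hySpan
        rcases eq_or_ne c 0 with rfl | hc
        · simp
        · exfalso
          exact hxT (by simpa [smul_smul, inv_mul_cancel₀ hc] using Submodule.smul_mem T c⁻¹ hyT)
      have := Submodule.finrank_sup_add_finrank_inf_eq T (Submodule.span K {x})
      rw [hinf, hspan1, hT, finrank_bot K V] at this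
      omega

end Count

theorem stmt7 (q n k ℓ t s r : ℕ) (F : Type*) [Field F] [Fintype F] (hF : Fintype.card F = q)
    (V : Type*) [AddCommGroup V] [Module F V] [FiniteDimensional F V]
    (hV : Module.finrank F V = n) (hn : k + ℓ ≤ n)
    (G S : Submodule F V) (hG : Module.finrank F G = ℓ) (hS : Module.finrank F S = s)
    (hGS : Module.finrank F ↥(G ⊓ S) = r) (hrt : r < t)
    (𝓕 : Set (Submodule F V)) (h𝓕k : ∀ W ∈ 𝓕, Module.finrank F W = k)
    (h𝓕G : ∀ W ∈ 𝓕, t ≤ Module.finrank F ↥(G ⊓ W)) :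
    ({W : Submodule F V | W ∈ 𝓕 ∧ S ≤ W}.ncard : ℚ)
      ≤ gaussBinom q (ℓ - r) (t - r) * gaussBinom q (n - s - t + r) (k - s - t + r) := by
  classical
  have hq2 : 2 ≤ q := hF ▸ Fintype.one_lt_card
  by_cases hne : {W : Submodule F V | W ∈ 𝓕 ∧ S ≤ W} = ∅
  · rw [hne]
    simp only [Set.ncard_empty, Nat.cast_zero]
    exact mul_nonneg (GaussAux.gauss_nonneg hq2 _ _) (GaussAux.gauss_nonneg hq2 _ _)
  obtain ⟨F0, hF0⟩ := Set.nonempty_iff_ne_empty.2 hne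
  haveI : Finite V := Module.finite_of_finite F
  haveI : Finite (Submodule F V) := Finite.of_injective _ SetLike.coe_injective
  haveI : Finite (Submodule F ↥G) := Finite.of_injective _ SetLike.coe_injective
  have hrs : r ≤ s := by
    rw [← hGS, ← hS]; exact Submodule.finrank_mono inf_le_right
  have htl : t ≤ ℓ := le_trans (h𝓕G F0 hF0.1)
    (by rw [← hG]; exact Submodule.finrank_mono inf_le_left)
  have hkn : k ≤ n := by
    rw [← hV, ← h𝓕k F0 hF0.1]; exact Submodule.finrank_le F0
  -- choose an intermediate subspace for each member of the family
  have ex : ∀ W, W ∈ 𝓕 ∧ S ≤ W →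
      ∃ T, G ⊓ S ≤ T ∧ T ≤ G ⊓ W ∧ Module.finrank F T = t := by
    intro W hW
    apply exists_submodule_between (inf_le_inf_left G hW.2)
    · rw [hGS]; omega
    · exact h𝓕G W hW.1
  let τ : Submodule F V → Submodule F V := fun W =>
    if h : W ∈ 𝓕 ∧ S ≤ W then Classical.choose (ex W h) else ⊥
  have hτ : ∀ W, (h : W ∈ 𝓕 ∧ S ≤ W) →
      G ⊓ S ≤ τ W ∧ τ W ≤ G ⊓ W ∧ Module.finrank F (τ W) = t := by
    intro W h
    have hτeq : τ W = Classical.choose (ex W h) := dif_pos h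
    rw [hτeq]
    exact Classical.choose_spec (ex W h)
  -- dimension of S ⊔ T for admissible T
  have hsupRank : ∀ T : Submodule F V, G ⊓ S ≤ T → T ≤ G → Module.finrank F T = t →
      Module.finrank F ↥(S ⊔ T) + r = s + t := by
    intro T h1 h2 h3
    have hST : S ⊓ T = G ⊓ S := by
      apply le_antisymm
      · exact le_inf (le_trans inf_le_right h2) inf_le_left
      · exact le_inf inf_le_right h1
    have hst := Submodule.finrank_sup_add_finrank_inf_eq S T
    rw [hST, hGS, hS, h3] at hst
    omega
  have hstk : s + t ≤ k + r := by
    obtain ⟨h1, h2, h3⟩ := hτ F0 hF0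
    have hsup := hsupRank (τ F0) h1 (le_trans h2 inf_le_left) h3
    have hle : S ⊔ τ F0 ≤ F0 := sup_le hF0.2 (le_trans h2 inf_le_right)
    have hmono := Submodule.finrank_mono hle
    rw [h𝓕k F0 hF0.1] at hmono
    omega
  have hkrn : k + r ≤ n := by omega
  set 𝒮 : Set (Submodule F V) := {W | W ∈ 𝓕 ∧ S ≤ W} with h𝒮
  set 𝒯 : Set (Submodule F V) := {T | G ⊓ S ≤ T ∧ T ≤ G ∧ Module.finrank F T = t} with h𝒯
  have h𝒮fin : 𝒮.Finite := Set.toFinite _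
  have h𝒯fin : 𝒯.Finite := Set.toFinite _
  set g1 : ℚ := gaussBinom q (ℓ - r) (t - r) with hg1
  set g2 : ℚ := gaussBinom q (n - s - t + r) (k - s - t + r) with hg2
  have hmaps : ∀ W ∈ h𝒮fin.toFinset, τ W ∈ h𝒯fin.toFinset := by
    intro W hW
    rw [Set.Finite.mem_toFinset] at hW ⊢
    obtain ⟨h1, h2, h3⟩ := hτ W hW
    exact ⟨h1, le_trans h2 inf_le_left, h3⟩
  -- fiber bound
  have hfiber : ∀ T ∈ h𝒯fin.toFinset,
      (((h𝒮fin.toFinset.filter (fun W => τ W = T)).card : ℚ)) ≤ g2 := by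
    intro T hT
    rw [Set.Finite.mem_toFinset] at hT
    obtain ⟨hT1, hT2, hT3⟩ := hT
    have hUa : Module.finrank F ↥(S ⊔ T) = s + t - r := by
      have := hsupRank T hT1 hT2 hT3
      omega
    have hsubset : ↑(h𝒮fin.toFinset.filter (fun W => τ W = T))
        ⊆ {W : Submodule F V | S ⊔ T ≤ W ∧ Module.finrank F W = k} := by
      intro W hW
      simp only [Finset.coe_filter, Set.mem_setOf_eq, Set.Finite.mem_toFinset] at hW
      obtain ⟨hW𝒮, hτW⟩ := hW
      obtain ⟨h1, h2, h3⟩ := hτ W hW𝒮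
      refine ⟨sup_le hW𝒮.2 ?_, h𝓕k W hW𝒮.1⟩
      rw [← hτW]
      exact le_trans h2 inf_le_right
    have hbound := card_subspaces_between_le hF (U := S ⊔ T) hUa
      (by omega : s + t - r ≤ k) (by rw [hV]; exact hkn)
    rw [hV] at hbound
    have hcardle : ((h𝒮fin.toFinset.filter (fun W => τ W = T)).card : ℚ)
        ≤ ({W : Submodule F V | S ⊔ T ≤ W ∧ Module.finrank F W = k}.ncard : ℚ) := by
      have := Set.ncard_le_ncard hsubset (Set.toFinite _)
      rw [Set.ncard_coe_finset] at this
      exact_mod_cast this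
    have hidx : n - (s + t - r) = n - s - t + r := by omega
    rw [hidx] at hbound
    refine le_trans hcardle (le_trans hbound ?_)
    rw [hg2]
    by_cases hgood : s + t ≤ k
    · have : k - (s + t - r) = k - s - t + r := by omega
      rw [this]
    · have hr : k - s - t + r = r := by omega
      rw [hr]
      exact GaussAux.gauss_mono hq2 (by omega) (by omega)
  -- count of the T's
  have hTcount : ((h𝒯fin.toFinset.card : ℚ)) ≤ g1 := by
    have hsub : 𝒯.ncard ≤ {T' : Submodule F ↥G |
        Submodule.comap G.subtype (G ⊓ S) ≤ T' ∧ Module.finrank F T' = t}.ncard := by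
      apply Set.ncard_le_ncard_of_injOn (fun T => Submodule.comap G.subtype T)
      · rintro T ⟨h1, h2, h3⟩
        constructor
        · exact Submodule.comap_mono h1
        · rw [(Submodule.comapSubtypeEquivOfLe h2).finrank_eq, h3]
      · rintro T₁ ⟨-, h2, -⟩ T₂ ⟨-, h2', -⟩ h
        have e1 : Submodule.map G.subtype (Submodule.comap G.subtype T₁) = T₁ := by
          rw [Submodule.map_comap_subtype, inf_eq_right.2 h2]
        have e2 : Submodule.map G.subtype (Submodule.comap G.subtype T₂) = T₂ := by
          rw [Submodule.map_comap_subtype, inf_eq_right.2 h2']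
        have h' : Submodule.comap G.subtype T₁ = Submodule.comap G.subtype T₂ := h
        rw [← e1, ← e2, h']
    have hU' : Module.finrank F ↥(Submodule.comap G.subtype (G ⊓ S)) = r := by
      rw [(Submodule.comapSubtypeEquivOfLe inf_le_left).finrank_eq, hGS]
    have hbound := card_subspaces_between_le hF (U := Submodule.comap G.subtype (G ⊓ S))
      hU' (le_of_lt hrt) (by rw [hG]; exact htl)
    rw [hG] at hbound
    rw [← Set.ncard_eq_toFinset_card _ h𝒯fin]
    refine le_trans ?_ hbound
    exact_mod_cast hsub
  calc ({W : Submodule F V | W ∈ 𝓕 ∧ S ≤ W}.ncard : ℚ)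
      = (h𝒮fin.toFinset.card : ℚ) := by
        rw [Set.ncard_eq_toFinset_card _ h𝒮fin]
    _ = ((∑ T ∈ h𝒯fin.toFinset, (h𝒮fin.toFinset.filter (fun W => τ W = T)).card : ℕ) : ℚ) := by
        rw [Finset.card_eq_sum_card_fiberwise hmaps]
    _ = ∑ T ∈ h𝒯fin.toFinset, ((h𝒮fin.toFinset.filter (fun W => τ W = T)).card : ℚ) := by
        push_cast; rfl
    _ ≤ ∑ _T ∈ h𝒯fin.toFinset, g2 := Finset.sum_le_sum hfiber
    _ = (h𝒯fin.toFinset.card : ℚ) * g2 := by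
        rw [Finset.sum_const, nsmul_eq_mul]
    _ ≤ g1 * g2 := mul_le_mul_of_nonneg_right hTcount (GaussAux.gauss_nonneg hq2 _ _)
end

section
/- If $\mathcal{F}$ is a non-trivial $r$-wise $t$-intersecting family of $k$-subspaces of a vector space over $\mathbb{F}_q$, and $B_1, \ldots, B_d \in \mathcal{F}$ with $d \le r$, then $\dim(B_1 \cap \cdots \cap B_d) \ge t + r - d$. In particular, $\mathcal{F}$ is a $(t+r-2)$-intersecting family. -/
theorem stmt11 (t r k : ℕ) (hr : 2 ≤ r) (F : Type*) [Field F] [Fintype F]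
    (V : Type*) [AddCommGroup V] [Module F V] [FiniteDimensional F V]
    (𝓕 : Set (Submodule F V)) (hk : ∀ W ∈ 𝓕, Module.finrank F W = k)
    (hwise : ∀ f : Fin r → Submodule F V, (∀ i, f i ∈ 𝓕) →
      t ≤ Module.finrank F ↥(⨅ i, f i))
    (hnontriv : ∀ T : Submodule F V, t ≤ Module.finrank F T → ∃ A ∈ 𝓕, ¬ T ≤ A) :
    (∀ d : ℕ, 1 ≤ d → d ≤ r → ∀ B : Fin d → Submodule F V, (∀ i, B i ∈ 𝓕) →
      t + r - d ≤ Module.finrank F ↥(⨅ i, B i)) ∧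
    (∀ A ∈ 𝓕, ∀ B ∈ 𝓕, t + r - 2 ≤ Module.finrank F ↥(A ⊓ B)) := by
  have key : ∀ n d : ℕ, 1 ≤ d → d + n = r → ∀ B : Fin d → Submodule F V,
      (∀ i, B i ∈ 𝓕) → t + n ≤ Module.finrank F ↥(⨅ i, B i) := by
    intro n
    induction n with
    | zero =>
      intro d hd hdr B hB
      simp only [Nat.add_zero] at hdr ⊢
      subst hdr
      exact hwise B hB
    | succ n ih =>
      intro d hd hdr B hB
      set X := ⨅ i, B i with hX
      -- pad B to a Fin r family
      have hdr' : d ≤ r := by omega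
      set f : Fin r → Submodule F V := fun i => B ⟨min i (d-1), by omega⟩ with hf
      have hXf : (⨅ i, f i) = X := by
        apply le_antisymm
        · apply le_iInf; intro j
          have hj : f ⟨j, by omega⟩ = B j := by
            simp only [hf]
            congr 1
            apply Fin.ext
            simp only []
            omega
          rw [← hj]
          exact iInf_le _ _
        · apply le_iInf; intro i
          exact iInf_le _ _
      have htX : t ≤ Module.finrank F X := by
        rw [← hXf]
        exact hwise f (fun i => hB _)
      obtain ⟨A, hA, hAX⟩ := hnontriv X htX
      have hmem : ∀ i, (Fin.snoc B A : Fin (d+1) → Submodule F V) i ∈ 𝓕 := by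
        intro i
        refine Fin.lastCases ?_ ?_ i
        · simpa using hA
        · intro j; simpa using hB j
      have hIH := ih (d+1) (by omega) (by omega) (Fin.snoc B A) hmem
      have hsnoc : (⨅ i, (Fin.snoc B A : Fin (d+1) → Submodule F V) i) = X ⊓ A := by
        apply le_antisymm
        · apply le_inf
          · apply le_iInf; intro j
            have : (Fin.snoc B A : Fin (d+1) → Submodule F V) j.castSucc = B j := by simp
            rw [← this]; exact iInf_le _ _
          · have h9 : (Fin.snoc B A : Fin (d+1) → Submodule F V) (Fin.last d) = A := by simp
            calc (⨅ i, (Fin.snoc B A : Fin (d+1) → Submodule F V) i)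
                ≤ (Fin.snoc B A : Fin (d+1) → Submodule F V) (Fin.last d) := iInf_le _ _
              _ = A := h9
        · apply le_iInf; intro i
          refine Fin.lastCases ?_ ?_ i
          · simp only [Fin.snoc_last]; exact inf_le_right
          · intro j
            simp only [Fin.snoc_castSucc]
            exact le_trans inf_le_left (iInf_le _ _)
      rw [hsnoc] at hIH
      have hlt : X ⊓ A < X := inf_lt_left.mpr hAX
      have hrank := Submodule.finrank_lt_finrank_of_lt hlt
      omega
  constructor
  · intro d hd1 hdr B hB
    have := key (r - d) d hd1 (by omega) B hB
    omega
  · intro A hA B hB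
    have hmem : ∀ i, (![A, B] : Fin 2 → Submodule F V) i ∈ 𝓕 := by
      intro i; fin_cases i <;> assumption
    have := key (r - 2) 2 (by omega) (by omega) ![A, B] hmem
    have heq : (⨅ i, (![A, B] : Fin 2 → Submodule F V) i) = A ⊓ B := by
      apply le_antisymm
      · exact le_inf (iInf_le _ 0) (iInf_le _ 1)
      · apply le_iInf; intro i
        fin_cases i
        · exact inf_le_left
        · exact inf_le_right
    rw [heq] at this
    omega
end

section
/- Let $V$ be an $n$-dimensional vector space over $\mathbb{F}_q$, let $t, r, k$ satisfy $r \ge 3$, $t + r - 1 \le k$, $n \ge k+1$. Let $X$ be a $(t+r-2)$-subspace and $M$ a $(k+1)$-subspace of $V$ with $X \subset M$. Then $\mathcal{A} \cup {M \brack k}$ is an $r$-wise $t$-intersecting family, where $\mathcal{A} = \{F \in {V \brack k} : X \subseteq F, \dim(F \cap M) \ge t+r-1\}$. -/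
open Module

lemma aux15 {F V : Type*} [Field F] [AddCommGroup V] [Module F V] [FiniteDimensional F V]
    {ι : Type*} (M : Submodule F V) (g : ι → Submodule F V) :
    ∀ (s : Finset ι) (W : Submodule F V), W ≤ M → (∀ i ∈ s, g i ≤ M) →
    finrank F W + ∑ i ∈ s, finrank F (g i)
      ≤ finrank F ↥(W ⊓ s.inf g) + s.card * finrank F M := by
  classical
  intro s
  induction s using Finset.induction_on with
  | empty => intro W hW _; rw [Finset.inf_empty, inf_top_eq]; simp
  | @insert a s ha ih =>
    intro W hW hg
    have hga : g a ≤ M := hg a (Finset.mem_insert_self a s)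
    have hmod : finrank F ↥(W ⊔ g a) + finrank F ↥(W ⊓ g a)
        = finrank F W + finrank F (g a) :=
      Submodule.finrank_sup_add_finrank_inf_eq W (g a)
    have hsup : finrank F ↥(W ⊔ g a) ≤ finrank F M :=
      Submodule.finrank_mono (sup_le hW hga)
    have key : finrank F W + finrank F (g a)
        ≤ finrank F ↥(W ⊓ g a) + finrank F M := by omega
    have hW' : W ⊓ g a ≤ M := le_trans inf_le_left hW
    have ih' := ih (W ⊓ g a) hW' (fun i hi => hg i (Finset.mem_insert_of_mem hi))
    have hinf : W ⊓ (insert a s).inf g = (W ⊓ g a) ⊓ s.inf g := by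
      rw [Finset.inf_insert, inf_assoc]
    rw [Finset.sum_insert ha, Finset.card_insert_of_notMem ha, hinf]
    have : (s.card + 1) * finrank F M = s.card * finrank F M + finrank F M := by ring
    omega

theorem stmt15 (n k t r : ℕ) (hr : 3 ≤ r) (hk : t + r - 1 ≤ k) (hn : k + 1 ≤ n)
    (F : Type*) [Field F] [Fintype F]
    (V : Type*) [AddCommGroup V] [Module F V] [FiniteDimensional F V]
    (hV : Module.finrank F V = n)
    (X M : Submodule F V) (hXM : X < M)
    (hX : Module.finrank F X = t + r - 2) (hM : Module.finrank F M = k + 1) :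
    ∀ f : Fin r → Submodule F V,
      (∀ i, (X ≤ f i ∧ Module.finrank F (f i) = k ∧
              t + r - 1 ≤ Module.finrank F ↥(f i ⊓ M)) ∨
            (f i ≤ M ∧ Module.finrank F (f i) = k)) →
      t ≤ Module.finrank F ↥(⨅ i, f i) := by
  classical
  intro f hf
  set P : Fin r → Prop := fun i => X ≤ f i ∧ t + r - 1 ≤ finrank F ↥(f i ⊓ M) with hP
  set S : Finset (Fin r) := Finset.univ.filter (fun i => ¬ P i) with hSdef
  have hfk : ∀ i, finrank F (f i) = k := fun i => (hf i).elim (fun h => h.2.1) (fun h => h.2)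
  have hSle : ∀ i ∈ S, f i ≤ M := by
    intro i hi
    rcases hf i with h | h
    · exact absurd ⟨h.1, h.2.2⟩ (Finset.mem_filter.mp hi).2
    · exact h.1
  have hPc : ∀ i ∉ S, P i := fun i hi =>
    not_not.mp (fun h => hi (Finset.mem_filter.mpr ⟨Finset.mem_univ i, h⟩))
  have hsum : ∑ i ∈ S, finrank F (f i) = S.card * k := by
    rw [Finset.sum_congr rfl (fun i _ => hfk i), Finset.sum_const, smul_eq_mul]
  by_cases hall : S = Finset.univ
  · -- all indices in case 2
    have hcard : S.card = r := by rw [hall, Finset.card_univ, Fintype.card_fin]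
    have hle : M ⊓ S.inf f ≤ ⨅ i, f i :=
      le_iInf fun i => le_trans inf_le_right (Finset.inf_le (hall ▸ Finset.mem_univ i))
    have hmono := Submodule.finrank_mono (R := F) hle
    have haux := aux15 M f S M le_rfl hSle
    rw [hsum, hM, hcard] at haux
    have e : r * (k + 1) = r * k + r := by ring
    rw [e] at haux
    generalize r * k = a at haux
    omega
  · have hex : ∃ i, i ∉ S := by
      by_contra h; push_neg at h; exact hall (Finset.eq_univ_iff_forall.mpr h)
    obtain ⟨i0, hi0⟩ := hex
    have hsub : S ⊆ Finset.univ.erase i0 := fun i hi =>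
      Finset.mem_erase.mpr ⟨fun h => hi0 (h ▸ hi), Finset.mem_univ i⟩
    have hcerase : (Finset.univ.erase i0).card = r - 1 := by
      rw [Finset.card_erase_of_mem (Finset.mem_univ i0), Finset.card_univ, Fintype.card_fin]
    have hScard : S.card ≤ r - 1 := hcerase ▸ Finset.card_le_card hsub
    by_cases hc : S.card ≤ r - 2
    · -- use X as base
      have hle : X ⊓ S.inf f ≤ ⨅ i, f i := by
        refine le_iInf fun i => ?_
        by_cases hi : i ∈ S
        · exact le_trans inf_le_right (Finset.inf_le hi)
        · exact le_trans inf_le_left (hPc i hi).1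
      have hmono := Submodule.finrank_mono (R := F) hle
      have haux := aux15 M f S X hXM.le hSle
      rw [hsum, hM, hX] at haux
      have e : S.card * (k + 1) = S.card * k + S.card := by ring
      rw [e] at haux
      generalize S.card * k = a at haux
      omega
    · -- S.card = r - 1, exactly one index outside S
      have hc' : S.card = r - 1 := by omega
      have hSeq : S = Finset.univ.erase i0 :=
        Finset.eq_of_subset_of_card_le hsub (by rw [hcerase, hc'])
      have hle : (f i0 ⊓ M) ⊓ S.inf f ≤ ⨅ i, f i := by
        refine le_iInf fun i => ?_
        by_cases hi : i = i0
        · subst hi; exact le_trans inf_le_left inf_le_left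
        · exact le_trans inf_le_right
            (Finset.inf_le (hSeq ▸ Finset.mem_erase.mpr ⟨hi, Finset.mem_univ i⟩))
      have hmono := Submodule.finrank_mono (R := F) hle
      have hW : t + r - 1 ≤ finrank F ↥(f i0 ⊓ M) := (hPc i0 hi0).2
      have haux := aux15 M f S (f i0 ⊓ M) inf_le_right hSle
      rw [hsum, hM, hc'] at haux
      have e : (r - 1) * (k + 1) = (r - 1) * k + (r - 1) := by ring
      rw [e] at haux
      generalize (r - 1) * k = a at haux
      omega
end

section
/- Let $n, k_1, k_2, t$ be positive integers with $n \ge k_1 + k_2 + t + 3$, $k_1 > k_2 \ge t+1$, and $q \ge 2$. Define $g_3(k, \ell) = {n-t-1 \brack k-t-1}_q \left( q^{\ell-t} {t+1 \brack 1}_q {n-t-1 \brack \ell-t}_q + {n-t-1 \brack \ell-t-1}_q \right)$. Then $g_3(k_2, k_1) < g_3(k_1, k_2)$. -/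
namespace GaussAux

noncomputable def N (q m r : ℕ) : ℚ := ∏ i ∈ Finset.range r, ((q:ℚ)^(m-i) - 1)
noncomputable def D (q r : ℕ) : ℚ := ∏ i ∈ Finset.range r, ((q:ℚ)^(i+1) - 1)

lemma one_lt_qpow {q : ℕ} (hq : 2 ≤ q) {e : ℕ} (he : 1 ≤ e) : (1:ℚ) < (q:ℚ)^e := by
  have h2 : (2:ℚ) ≤ (q:ℚ) := by exact_mod_cast hq
  calc (1:ℚ) < 2 := by norm_num
    _ ≤ (q:ℚ) := h2
    _ = (q:ℚ)^1 := (pow_one _).symm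
    _ ≤ (q:ℚ)^e := by
        apply pow_le_pow_right₀ (by linarith) he

lemma two_le_qpow {q : ℕ} (hq : 2 ≤ q) {e : ℕ} (he : 1 ≤ e) : (2:ℚ) ≤ (q:ℚ)^e := by
  have h2 : (2:ℚ) ≤ (q:ℚ) := by exact_mod_cast hq
  calc (2:ℚ) ≤ (q:ℚ) := h2
    _ = (q:ℚ)^1 := (pow_one _).symm
    _ ≤ (q:ℚ)^e := by
        apply pow_le_pow_right₀ (by linarith) he

lemma Dpos {q : ℕ} (hq : 2 ≤ q) (r : ℕ) : 0 < D q r := by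
  apply Finset.prod_pos
  intro i _
  have := one_lt_qpow hq (e := i+1) (by omega)
  linarith

lemma Npos {q : ℕ} (hq : 2 ≤ q) {m r : ℕ} (h : r ≤ m) : 0 < N q m r := by
  apply Finset.prod_pos
  intro i hi
  simp only [Finset.mem_range] at hi
  have := one_lt_qpow hq (e := m - i) (by omega)
  linarith

lemma gauss_eq (q m r : ℕ) : gaussBinom q m r = N q m r / D q r := by
  unfold gaussBinom N D
  rw [Finset.prod_div_distrib]
  congr 1
  rw [← Finset.prod_range_reflect (fun i => ((q:ℚ)^(i+1) - 1)) r]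
  apply Finset.prod_congr rfl
  intro i hi
  simp only [Finset.mem_range] at hi
  congr 2
  omega

lemma N_succ (q m r : ℕ) : N q m (r+1) = N q m r * ((q:ℚ)^(m-r) - 1) :=
  Finset.prod_range_succ _ _

lemma D_succ (q r : ℕ) : D q (r+1) = D q r * ((q:ℚ)^(r+1) - 1) :=
  Finset.prod_range_succ _ _

lemma gauss_succ {q : ℕ} (hq : 2 ≤ q) (m r : ℕ) :
    gaussBinom q m (r+1) = gaussBinom q m r * (((q:ℚ)^(m-r) - 1) / ((q:ℚ)^(r+1) - 1)) := by
  rw [gauss_eq, gauss_eq, N_succ, D_succ, mul_div_mul_comm]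

lemma key {q m a b : ℕ} (hq : 2 ≤ q) (hba : b < a) (ham : a + 1 ≤ m) :
    (q:ℚ)^(a+1) * (gaussBinom q m b * gaussBinom q m (a+1)) <
      (q:ℚ)^(b+1) * (gaussBinom q m a * gaussBinom q m (b+1)) := by
  have hu : (2:ℚ) ≤ (q:ℚ)^(b+1) := two_le_qpow hq (by omega)
  have hv : (2:ℚ) ≤ (q:ℚ)^(a-b) := two_le_qpow hq (by omega)
  have hw : (2:ℚ) ≤ (q:ℚ)^(m-a) := two_le_qpow hq (by omega)
  have hda : (0:ℚ) < (q:ℚ)^(a+1) - 1 := by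
    have := one_lt_qpow hq (e := a+1) (by omega); linarith
  have hdb : (0:ℚ) < (q:ℚ)^(b+1) - 1 := by
    have := one_lt_qpow hq (e := b+1) (by omega); linarith
  have hCa : 0 < gaussBinom q m a := by
    rw [gauss_eq]; exact div_pos (Npos hq (by omega)) (Dpos hq _)
  have hCb : 0 < gaussBinom q m b := by
    rw [gauss_eq]; exact div_pos (Npos hq (by omega)) (Dpos hq _)
  rw [gauss_succ hq m a, gauss_succ hq m b]
  -- reduce to scalar inequality
  have scalar : (q:ℚ)^(a+1) * (((q:ℚ)^(m-a) - 1) / ((q:ℚ)^(a+1) - 1)) <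
      (q:ℚ)^(b+1) * (((q:ℚ)^(m-b) - 1) / ((q:ℚ)^(b+1) - 1)) := by
    rw [mul_div_assoc', mul_div_assoc', div_lt_div_iff₀ hda hdb]
    have e1 : (q:ℚ)^(a+1) = (q:ℚ)^(b+1) * (q:ℚ)^(a-b) := by
      rw [← pow_add]; congr 1; omega
    have e2 : (q:ℚ)^(m-b) = (q:ℚ)^(a-b) * (q:ℚ)^(m-a) := by
      rw [← pow_add]; congr 1; omega
    rw [e1, e2]
    set u := (q:ℚ)^(b+1) with hu'
    set v := (q:ℚ)^(a-b) with hv'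
    set w := (q:ℚ)^(m-a) with hw'
    have expand : u * ((v*w) - 1) * (u*v - 1) - u*v * (w - 1) * (u - 1)
        = u * (v - 1) * (u*v*w - 1) := by ring
    have h4 : (2:ℚ)*2 ≤ u*v := mul_le_mul hu hv (by norm_num) (by linarith)
    have h8 : (2:ℚ)*2*2 ≤ u*v*w := mul_le_mul h4 hw (by norm_num) (by linarith)
    have hpos : 0 < u * (v - 1) * (u*v*w - 1) := by
      apply mul_pos (mul_pos (by linarith) (by linarith))
      linarith
    nlinarith [expand, hpos]
  have hP : 0 < gaussBinom q m a * gaussBinom q m b := mul_pos hCa hCb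
  calc (q:ℚ)^(a+1) * (gaussBinom q m b *
          (gaussBinom q m a * (((q:ℚ)^(m-a) - 1) / ((q:ℚ)^(a+1) - 1))))
      = (gaussBinom q m a * gaussBinom q m b) *
          ((q:ℚ)^(a+1) * (((q:ℚ)^(m-a) - 1) / ((q:ℚ)^(a+1) - 1))) := by ring
    _ < (gaussBinom q m a * gaussBinom q m b) *
          ((q:ℚ)^(b+1) * (((q:ℚ)^(m-b) - 1) / ((q:ℚ)^(b+1) - 1))) := by
          exact mul_lt_mul_of_pos_left scalar hP
    _ = (q:ℚ)^(b+1) * (gaussBinom q m a *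
          (gaussBinom q m b * (((q:ℚ)^(m-b) - 1) / ((q:ℚ)^(b+1) - 1)))) := by ring

end GaussAux

theorem stmt19 (q n k₁ k₂ t : ℕ) (hq : 2 ≤ q) (ht : 1 ≤ t) (hk : k₂ < k₁)
    (hk₂ : t + 1 ≤ k₂) (hn : k₁ + k₂ + t + 3 ≤ n) :
    gaussBinom q (n - t - 1) (k₂ - t - 1) *
        ((q : ℚ) ^ (k₁ - t) * gaussBinom q (t + 1) 1 * gaussBinom q (n - t - 1) (k₁ - t) +
          gaussBinom q (n - t - 1) (k₁ - t - 1))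
      < gaussBinom q (n - t - 1) (k₁ - t - 1) *
        ((q : ℚ) ^ (k₂ - t) * gaussBinom q (t + 1) 1 * gaussBinom q (n - t - 1) (k₂ - t) +
          gaussBinom q (n - t - 1) (k₂ - t - 1)) := by
  have h1 : k₁ - t = (k₁ - t - 1) + 1 := by omega
  have h2 : k₂ - t = (k₂ - t - 1) + 1 := by omega
  rw [h1, h2]
  simp only [Nat.add_sub_cancel]
  set a := k₁ - t - 1 with ha
  set b := k₂ - t - 1 with hb
  set m := n - t - 1 with hm
  have hba : b < a := by omega
  have ham : a + 1 ≤ m := by omega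
  have hG : 0 < gaussBinom q (t+1) 1 := by
    unfold gaussBinom
    rw [Finset.prod_range_one]
    apply div_pos
    · have := GaussAux.one_lt_qpow hq (e := t + 1 - 0) (by omega); linarith
    · have := GaussAux.one_lt_qpow hq (e := 1 - 0) (by omega); linarith
  have key := GaussAux.key (q := q) (m := m) hq hba ham
  have key2 := mul_lt_mul_of_pos_left key hG
  nlinarith [key2]
end
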